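/- arXiv:2501.13885 — 3 statements merged into one kernel-verified Lean document; each statement's English description precedes it below -/
import Mathlib

section
/- Let A be a unital *-subalgebra of B(H) for a finite-dimensional Hilbert space H, with orthogonal conditional expectation E onto A factored as E = J ∘ R where R: B(H) → Ǎ and J: Ǎ → B(H) are the CPTP factors from the Wedderburn decomposition. Then for every A in Ǎ and every X in B(H), R(X · J(A)) = J*(X) · A and R(J(A) · X) = A · J*(X), where J* denotes the Hilbert–Schmidt adjoint of J. -/
/-!
Each of `Rmap`, `Jmap`, `Jstar` is a sum over the Wedderburn blocks. Because the block isometries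
have mutually orthogonal ranges, compressing `X * J A` by `V k` sees only the `k`-th block
`(W kᴴ A W k) ⊗ 1 / dG k` of `J A`, and a factor `C ⊗ 1` passes through the partial trace over the
second tensor factor. What remains is `W k (ptrG ⋯) (W kᴴ A W k) W kᴴ`, and block-diagonality of `A`
turns `(W kᴴ A W k) W kᴴ` back into `W kᴴ A`.
-/

open Matrix
open scoped Kronecker BigOperators

noncomputable section

abbrev Mat (n : ℕ) : Type := Matrix (Fin n) (Fin n) ℂ

/-- Partial trace over the second tensor factor. -/
def ptrG {a b : ℕ} (M : Matrix (Fin a × Fin b) (Fin a × Fin b) ℂ) :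
    Matrix (Fin a) (Fin a) ℂ :=
  Matrix.of fun i j => ∑ g : Fin b, M (i, g) (j, g)

variable {K n m : ℕ} {dF dG : Fin K → ℕ}

/-- The reduction map `R : B(H) → Ǎ`, `R(X) = ⊕ₖ tr_{G,k}(Vₖ* X Vₖ)`. -/
def Rmap (V : ∀ k : Fin K, Matrix (Fin n) (Fin (dF k) × Fin (dG k)) ℂ)
    (W : ∀ k : Fin K, Matrix (Fin m) (Fin (dF k)) ℂ) (X : Mat n) : Mat m :=
  ∑ k : Fin K, W k * ptrG ((V k)ᴴ * X * V k) * (W k)ᴴ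

/-- The injection map `J : Ǎ → B(H)`, `J(ρ̌) = ⊕ₖ ρ̌ₖ ⊗ 1_{G,k}/dim H_{G,k}`. -/
def Jmap (V : ∀ k : Fin K, Matrix (Fin n) (Fin (dF k) × Fin (dG k)) ℂ)
    (W : ∀ k : Fin K, Matrix (Fin m) (Fin (dF k)) ℂ) (ρ : Mat m) : Mat n :=
  ∑ k : Fin K, V k *
    (((W k)ᴴ * ρ * W k) ⊗ₖ (((dG k : ℂ))⁻¹ • (1 : Matrix (Fin (dG k)) (Fin (dG k)) ℂ))) *
    (V k)ᴴ

/-- The Hilbert–Schmidt adjoint of `J`, `J*(X) = ⊕ₖ tr_{G,k}(Vₖ* X Vₖ)/dim H_{G,k}`. -/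
def Jstar (V : ∀ k : Fin K, Matrix (Fin n) (Fin (dF k) × Fin (dG k)) ℂ)
    (W : ∀ k : Fin K, Matrix (Fin m) (Fin (dF k)) ℂ) (X : Mat n) : Mat m :=
  ∑ k : Fin K, ((dG k : ℂ))⁻¹ • (W k * ptrG ((V k)ᴴ * X * V k) * (W k)ᴴ)

/-- Membership in the reduced algebra `Ǎ = ⊕ₖ B(H_{F,k})`: block-diagonal matrices. -/
def IsBlockDiag (W : ∀ k : Fin K, Matrix (Fin m) (Fin (dF k)) ℂ) (ρ : Mat m) : Prop :=
  ρ = ∑ k : Fin K, (W k * (W k)ᴴ) * ρ * (W k * (W k)ᴴ)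

section PartialTrace

variable {a b : ℕ} (M : Matrix (Fin a × Fin b) (Fin a × Fin b) ℂ) (C : Matrix (Fin a) (Fin a) ℂ)

lemma ptrG_smul (c : ℂ) : ptrG (c • M) = c • ptrG M := by
  ext i j
  simp [ptrG, Finset.mul_sum]

lemma ptrG_mul_kronecker_one : ptrG (M * (C ⊗ₖ (1 : Matrix (Fin b) (Fin b) ℂ))) = ptrG M * C := by
  ext i j
  simp only [ptrG, Matrix.of_apply, Matrix.mul_apply, Fintype.sum_prod_type,
    Matrix.kroneckerMap_apply, Matrix.one_apply, mul_ite, mul_one, mul_zero, Finset.sum_ite_eq',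
    Finset.mem_univ, if_true, Finset.sum_mul]
  exact Finset.sum_comm

lemma ptrG_kronecker_one_mul : ptrG ((C ⊗ₖ (1 : Matrix (Fin b) (Fin b) ℂ)) * M) = C * ptrG M := by
  ext i j
  simp only [ptrG, Matrix.of_apply, Matrix.mul_apply, Fintype.sum_prod_type,
    Matrix.kroneckerMap_apply, Matrix.one_apply, mul_ite, ite_mul, mul_one, mul_zero, zero_mul,
    Finset.sum_ite_eq, Finset.mem_univ, if_true, Finset.mul_sum]
  exact Finset.sum_comm

end PartialTrace

section BlockCompression

variable {ι n R : Type*} [Fintype ι] [Fintype n] [Semiring R] [StarRing R]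
  {p : ι → Type*} [∀ i, Fintype (p i)] [∀ i, DecidableEq (p i)]
  {V : ∀ i, Matrix n (p i) R}

lemma conjTranspose_mul_sum_blocks (hortho : ∀ k, (V k)ᴴ * V k = 1)
    (hdisj : ∀ j k, j ≠ k → (V j)ᴴ * V k = 0) (B : ∀ i, Matrix (p i) (p i) R) (k : ι) :
    (V k)ᴴ * ∑ j, V j * B j * (V j)ᴴ = B k * (V k)ᴴ := by
  rw [Matrix.mul_sum, Finset.sum_eq_single k]
  · rw [← Matrix.mul_assoc, ← Matrix.mul_assoc, hortho, Matrix.one_mul]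
  · intro j _ hj
    rw [← Matrix.mul_assoc, ← Matrix.mul_assoc, hdisj k j hj.symm, Matrix.zero_mul, Matrix.zero_mul]
  · simp

lemma sum_blocks_mul (hortho : ∀ k, (V k)ᴴ * V k = 1)
    (hdisj : ∀ j k, j ≠ k → (V j)ᴴ * V k = 0) (B : ∀ i, Matrix (p i) (p i) R) (k : ι) :
    (∑ j, V j * B j * (V j)ᴴ) * V k = V k * B k := by
  rw [Matrix.sum_mul, Finset.sum_eq_single k]
  · rw [Matrix.mul_assoc, hortho, Matrix.mul_one]
  · intro j _ hj
    rw [Matrix.mul_assoc, hdisj j k hj, Matrix.mul_zero]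
  · simp

end BlockCompression

section Wedderburn

variable {K n m : ℕ} {dF dG : Fin K → ℕ} {W : ∀ k : Fin K, Matrix (Fin m) (Fin (dF k)) ℂ}

lemma IsBlockDiag.eq_sum {A : Mat m} (hA : IsBlockDiag W A) :
    A = ∑ k, W k * ((W k)ᴴ * A * W k) * (W k)ᴴ := by
  conv_lhs => rw [hA]
  simp only [Matrix.mul_assoc]

lemma IsBlockDiag.conjTranspose_mul {A : Mat m} (hA : IsBlockDiag W A)
    (hWortho : ∀ k, (W k)ᴴ * W k = 1) (hWdisj : ∀ j k, j ≠ k → (W j)ᴴ * W k = 0) (k : Fin K) :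
    (W k)ᴴ * A = (W k)ᴴ * A * W k * (W k)ᴴ := by
  conv_lhs => rw [hA.eq_sum]
  exact conjTranspose_mul_sum_blocks hWortho hWdisj _ k

lemma IsBlockDiag.mul_eq {A : Mat m} (hA : IsBlockDiag W A)
    (hWortho : ∀ k, (W k)ᴴ * W k = 1) (hWdisj : ∀ j k, j ≠ k → (W j)ᴴ * W k = 0) (k : Fin K) :
    A * W k = W k * ((W k)ᴴ * A * W k) := by
  conv_lhs => rw [hA.eq_sum]
  exact sum_blocks_mul hWortho hWdisj _ k

variable {V : ∀ k : Fin K, Matrix (Fin n) (Fin (dF k) × Fin (dG k)) ℂ}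

lemma conjTranspose_mul_mul_Jmap_mul (hVortho : ∀ k, (V k)ᴴ * V k = 1)
    (hVdisj : ∀ j k, j ≠ k → (V j)ᴴ * V k = 0) (X : Mat n) (ρ : Mat m) (k : Fin K) :
    (V k)ᴴ * (X * Jmap V W ρ) * V k =
      (V k)ᴴ * X * V k * (((W k)ᴴ * ρ * W k) ⊗ₖ ((dG k : ℂ)⁻¹ • 1)) := by
  rw [Matrix.mul_assoc, Matrix.mul_assoc, Jmap, sum_blocks_mul hVortho hVdisj,
    ← Matrix.mul_assoc, ← Matrix.mul_assoc]

lemma conjTranspose_mul_Jmap_mul_mul (hVortho : ∀ k, (V k)ᴴ * V k = 1)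
    (hVdisj : ∀ j k, j ≠ k → (V j)ᴴ * V k = 0) (X : Mat n) (ρ : Mat m) (k : Fin K) :
    (V k)ᴴ * (Jmap V W ρ * X) * V k =
      (((W k)ᴴ * ρ * W k) ⊗ₖ ((dG k : ℂ)⁻¹ • 1)) * ((V k)ᴴ * X * V k) := by
  rw [← Matrix.mul_assoc, Jmap, conjTranspose_mul_sum_blocks hVortho hVdisj]
  simp only [Matrix.mul_assoc]

lemma ptrG_compress_mul_Jmap (hVortho : ∀ k, (V k)ᴴ * V k = 1)
    (hVdisj : ∀ j k, j ≠ k → (V j)ᴴ * V k = 0) (hWortho : ∀ k, (W k)ᴴ * W k = 1)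
    (hWdisj : ∀ j k, j ≠ k → (W j)ᴴ * W k = 0) (X : Mat n) {A : Mat m} (hA : IsBlockDiag W A)
    (k : Fin K) :
    W k * ptrG ((V k)ᴴ * (X * Jmap V W A) * V k) * (W k)ᴴ =
      (dG k : ℂ)⁻¹ • (W k * ptrG ((V k)ᴴ * X * V k) * (W k)ᴴ) * A :=
  calc W k * ptrG ((V k)ᴴ * (X * Jmap V W A) * V k) * (W k)ᴴ
      = W k * ptrG ((V k)ᴴ * X * V k * (((W k)ᴴ * A * W k) ⊗ₖ ((dG k : ℂ)⁻¹ • 1))) * (W k)ᴴ := by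
        rw [conjTranspose_mul_mul_Jmap_mul hVortho hVdisj]
    _ = (dG k : ℂ)⁻¹ • (W k * ptrG ((V k)ᴴ * X * V k) * ((W k)ᴴ * A * W k * (W k)ᴴ)) := by
        rw [kronecker_smul, Matrix.mul_smul, ptrG_smul, ptrG_mul_kronecker_one]
        simp only [Matrix.mul_smul, Matrix.smul_mul, Matrix.mul_assoc]
    _ = (dG k : ℂ)⁻¹ • (W k * ptrG ((V k)ᴴ * X * V k) * (W k)ᴴ) * A := by
        rw [Matrix.smul_mul, Matrix.mul_assoc _ (W k)ᴴ, ← hA.conjTranspose_mul hWortho hWdisj,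
          Matrix.mul_assoc]

lemma ptrG_compress_Jmap_mul (hVortho : ∀ k, (V k)ᴴ * V k = 1)
    (hVdisj : ∀ j k, j ≠ k → (V j)ᴴ * V k = 0) (hWortho : ∀ k, (W k)ᴴ * W k = 1)
    (hWdisj : ∀ j k, j ≠ k → (W j)ᴴ * W k = 0) (X : Mat n) {A : Mat m} (hA : IsBlockDiag W A)
    (k : Fin K) :
    W k * ptrG ((V k)ᴴ * (Jmap V W A * X) * V k) * (W k)ᴴ =
      A * ((dG k : ℂ)⁻¹ • (W k * ptrG ((V k)ᴴ * X * V k) * (W k)ᴴ)) :=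
  calc W k * ptrG ((V k)ᴴ * (Jmap V W A * X) * V k) * (W k)ᴴ
      = W k * ptrG ((((W k)ᴴ * A * W k) ⊗ₖ ((dG k : ℂ)⁻¹ • 1)) * ((V k)ᴴ * X * V k)) * (W k)ᴴ := by
        rw [conjTranspose_mul_Jmap_mul_mul hVortho hVdisj]
    _ = (dG k : ℂ)⁻¹ • (W k * ((W k)ᴴ * A * W k) * ptrG ((V k)ᴴ * X * V k) * (W k)ᴴ) := by
        rw [kronecker_smul, Matrix.smul_mul, ptrG_smul, ptrG_kronecker_one_mul]
        simp only [Matrix.mul_smul, Matrix.smul_mul, Matrix.mul_assoc]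
    _ = A * ((dG k : ℂ)⁻¹ • (W k * ptrG ((V k)ᴴ * X * V k) * (W k)ᴴ)) := by
        rw [Matrix.mul_smul, ← Matrix.mul_assoc A, ← Matrix.mul_assoc A,
          hA.mul_eq hWortho hWdisj, Matrix.mul_assoc]

end Wedderburn

theorem reduction_injection_module_property_general
    (V : ∀ k : Fin K, Matrix (Fin n) (Fin (dF k) × Fin (dG k)) ℂ)
    (W : ∀ k : Fin K, Matrix (Fin m) (Fin (dF k)) ℂ)
    (hVortho : ∀ k, (V k)ᴴ * V k = 1)
    (hVdisj : ∀ j k, j ≠ k → (V j)ᴴ * V k = 0)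
    (hWortho : ∀ k, (W k)ᴴ * W k = 1)
    (hWdisj : ∀ j k, j ≠ k → (W j)ᴴ * W k = 0)
    (X : Mat n) (A : Mat m) (hA : IsBlockDiag W A) :
    Rmap V W (X * Jmap V W A) = Jstar V W X * A ∧
    Rmap V W (Jmap V W A * X) = A * Jstar V W X := by
  constructor
  · rw [Rmap, Jstar, Matrix.sum_mul]
    exact Finset.sum_congr rfl fun k _ =>
      ptrG_compress_mul_Jmap hVortho hVdisj hWortho hWdisj X hA k
  · rw [Rmap, Jstar, Matrix.mul_sum]
    exact Finset.sum_congr rfl fun k _ =>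
      ptrG_compress_Jmap_mul hVortho hVdisj hWortho hWdisj X hA k

theorem reduction_injection_module_property
    (V : ∀ k : Fin K, Matrix (Fin n) (Fin (dF k) × Fin (dG k)) ℂ)
    (W : ∀ k : Fin K, Matrix (Fin m) (Fin (dF k)) ℂ)
    (hVortho : ∀ k, (V k)ᴴ * V k = 1)
    (hVdisj : ∀ j k, j ≠ k → (V j)ᴴ * V k = 0)
    (hVcomplete : ∑ k : Fin K, V k * (V k)ᴴ = 1)
    (hWortho : ∀ k, (W k)ᴴ * W k = 1)
    (hWdisj : ∀ j k, j ≠ k → (W j)ᴴ * W k = 0)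
    (hWcomplete : ∑ k : Fin K, W k * (W k)ᴴ = 1)
    (hdG : ∀ k, 0 < dG k)
    (X : Mat n) (A : Mat m) (hA : IsBlockDiag W A) :
    Rmap V W (X * Jmap V W A) = Jstar V W X * A ∧
    Rmap V W (Jmap V W A * X) = A * Jstar V W X :=
  reduction_injection_module_property_general V W hVortho hVdisj hWortho hWdisj X A hA
end
end

section
/- With the notation of the Kraus-reduction construction, choose the orthonormal basis so that G^{(j,j)}_1 = 1_{H_{G,j}}/dim(H_{G,j})^{1/2} for each j. Then J*(C) is one of the reduced Kraus operators, namely J*(C) = Č_{1,0}. Moreover, if C belongs to the algebra A itself, then the set of reduced Kraus operators of C reduces to the single operator J*(C). -/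
/-! Sandwiching `C` between the isometries `V q`, `V p` isolates its block
`∑ ℓ, C^{(q,p)}_ℓ ⊗ G^{(q,p)}_ℓ`, and pairing that block with `G^{(q,p)}_ℓ` on the second tensor
factor returns `C^{(q,p)}_ℓ` by orthonormality. As `G^{(q,q)}_1 = 1/√dim H_{G,q}`, this pairing
is the partial trace divided by `√dim H_{G,q}`, whence `J*(C) = Č_{1,0}`. If `C ∈ A`, its blocks
are `B_q ⊗ 1` on the diagonal and `0` off it; every other `G^{(q,q)}_ℓ` is orthogonal to the
identity, i.e. traceless, so all remaining coefficients vanish. -/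

open Matrix
open scoped Kronecker BigOperators

noncomputable section

variable {K n m : ℕ} {dF dG : Fin K → ℕ}

/-- The reduced Kraus operators `Č_{ℓ,e}`. -/
def redKraus (dG : Fin K → ℕ) (W : ∀ k : Fin K, Matrix (Fin m) (Fin (dF k)) ℂ)
    {d : ℕ} (CF : ∀ j k : Fin K, Fin d → Matrix (Fin (dF j)) (Fin (dF k)) ℂ)
    (ℓ : Fin d) (e : ℤ) : Mat m :=
  ∑ j : Fin K, ∑ k : Fin K,
    if ((k : ℤ) - (j : ℤ) = e) then
      ((Real.sqrt (dG k) : ℂ))⁻¹ • (W j * CF j k ℓ * (W k)ᴴ)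
    else 0

section Compression

variable {κ R : Type*} [Fintype κ] [Semiring R] [StarRing R]
  {ι : κ → Type*} [∀ k, Fintype (ι k)] [∀ k, DecidableEq (ι k)] {ν : Type*}
  {V : ∀ k, Matrix ν (ι k) R}

theorem conjTranspose_mul_sum_of_orthonormal {α : Type*} [Fintype α] [Fintype ν]
    (hVortho : ∀ k, (V k)ᴴ * V k = 1) (hVdisj : ∀ j k, j ≠ k → (V j)ᴴ * V k = 0)
    (Z : ∀ k, Matrix (ι k) α R) (q : κ) :
    (V q)ᴴ * ∑ k, V k * Z k = Z q := by
  rw [Matrix.mul_sum, Finset.sum_eq_single q]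
  · rw [← Matrix.mul_assoc, hVortho, Matrix.one_mul]
  · intro k _ hk
    rw [← Matrix.mul_assoc, hVdisj q k (Ne.symm hk), Matrix.zero_mul]
  · exact fun h => absurd (Finset.mem_univ q) h

theorem sum_mul_of_orthonormal {α : Type*} [Fintype ν]
    (hVortho : ∀ k, (V k)ᴴ * V k = 1) (hVdisj : ∀ j k, j ≠ k → (V j)ᴴ * V k = 0)
    (Z : ∀ k, Matrix α (ι k) R) (p : κ) :
    (∑ k, Z k * (V k)ᴴ) * V p = Z p := by
  rw [Matrix.sum_mul, Finset.sum_eq_single p]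
  · rw [Matrix.mul_assoc, hVortho, Matrix.mul_one]
  · intro k _ hk
    rw [Matrix.mul_assoc, hVdisj k p hk, Matrix.mul_zero]
  · exact fun h => absurd (Finset.mem_univ p) h

theorem conjTranspose_mul_sum_sum_mul_of_orthonormal [Fintype ν]
    (hVortho : ∀ k, (V k)ᴴ * V k = 1) (hVdisj : ∀ j k, j ≠ k → (V j)ᴴ * V k = 0)
    (X : ∀ j k, Matrix (ι j) (ι k) R) (q p : κ) :
    (V q)ᴴ * (∑ j, ∑ k, V j * X j k * (V k)ᴴ) * V p = X q p := by
  have hS : ∑ j, ∑ k, V j * X j k * (V k)ᴴ = ∑ j, V j * ∑ k, X j k * (V k)ᴴ := by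
    simp only [Matrix.mul_sum, Matrix.mul_assoc]
  rw [hS, conjTranspose_mul_sum_of_orthonormal hVortho hVdisj,
    sum_mul_of_orthonormal hVortho hVdisj]

theorem conjTranspose_mul_sum_diag_mul_of_orthonormal [Fintype ν]
    (hVortho : ∀ k, (V k)ᴴ * V k = 1) (hVdisj : ∀ j k, j ≠ k → (V j)ᴴ * V k = 0)
    (Y : ∀ k, Matrix (ι k) (ι k) R) (q p : κ) :
    (V q)ᴴ * (∑ k, V k * Y k * (V k)ᴴ) * V p = Y q * ((V q)ᴴ * V p) := by
  have hS : ∑ k, V k * Y k * (V k)ᴴ = ∑ k, V k * (Y k * (V k)ᴴ) := by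
    simp only [Matrix.mul_assoc]
  rw [hS, conjTranspose_mul_sum_of_orthonormal hVortho hVdisj, Matrix.mul_assoc]

end Compression

section PartialInner

variable {R : Type*} [CommSemiring R] [StarRing R] {α β γ δ : Type*} [Fintype β] [Fintype δ]

def partialInner (G : Matrix β δ R) : Matrix (α × β) (γ × δ) R →ₗ[R] Matrix α γ R where
  toFun M := Matrix.of fun i j => ∑ g, ∑ g', star (G g g') * M (i, g) (j, g')
  map_add' M N := by
    ext i j
    simp only [Matrix.of_apply, Matrix.add_apply, mul_add, Finset.sum_add_distrib]
  map_smul' c M := by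
    ext i j
    simp only [Matrix.of_apply, Matrix.smul_apply, smul_eq_mul, RingHom.id_apply, Finset.mul_sum]
    exact Finset.sum_congr rfl fun _ _ => Finset.sum_congr rfl fun _ _ => mul_left_comm _ _ _

theorem partialInner_kronecker (G : Matrix β δ R) (A : Matrix α γ R) (B : Matrix β δ R) :
    partialInner G (A ⊗ₖ B) = (Gᴴ * B).trace • A := by
  ext i j
  simp only [partialInner, LinearMap.coe_mk, AddHom.coe_mk, Matrix.of_apply,
    Matrix.kroneckerMap_apply, Matrix.smul_apply, Matrix.trace, Matrix.diag, Matrix.mul_apply,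
    Matrix.conjTranspose_apply, smul_eq_mul, Finset.sum_mul]
  rw [Finset.sum_comm]
  exact Finset.sum_congr rfl fun _ _ => Finset.sum_congr rfl fun _ _ => by ring

theorem partialInner_smul_left (c : R) (G : Matrix β δ R) (M : Matrix (α × β) (γ × δ) R) :
    partialInner (c • G) M = star c • partialInner G M := by
  ext i j
  simp only [partialInner, LinearMap.coe_mk, AddHom.coe_mk, Matrix.of_apply, Matrix.smul_apply,
    smul_eq_mul, star_mul', Finset.mul_sum, mul_assoc]

theorem partialInner_zero_left (M : Matrix (α × β) (γ × δ) R) :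
    partialInner (0 : Matrix β δ R) M = 0 := by
  simpa using partialInner_smul_left (0 : R) 0 M

theorem eq_partialInner_sum_kronecker {ι : Type*} [Fintype ι] [DecidableEq ι]
    (C : ι → Matrix α γ R) (G : ι → Matrix β δ R)
    (hGorth : ∀ ℓ f, ℓ ≠ f → ((G ℓ)ᴴ * G f).trace = 0)
    (hGnorm : ∀ ℓ, G ℓ ≠ 0 → ((G ℓ)ᴴ * G ℓ).trace = 1)
    (hpad : ∀ ℓ, G ℓ = 0 → C ℓ = 0) (f : ι) :
    C f = partialInner (G f) (∑ ℓ, C ℓ ⊗ₖ G ℓ) := by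
  by_cases hGf : G f = 0
  · rw [hpad f hGf, hGf, partialInner_zero_left]
  rw [map_sum, Finset.sum_eq_single f]
  · rw [partialInner_kronecker, hGnorm f hGf, one_smul]
  · intro ℓ _ hℓ
    rw [partialInner_kronecker, hGorth f ℓ (Ne.symm hℓ), zero_smul]
  · exact fun h => absurd (Finset.mem_univ f) h

end PartialInner

theorem ptrG_eq_partialInner_one {a b : ℕ} (M : Matrix (Fin a × Fin b) (Fin a × Fin b) ℂ) :
    ptrG M = partialInner 1 M := by
  ext i j
  simp [ptrG, partialInner, Matrix.one_apply]

theorem redKraus_zero {d : ℕ} (W : ∀ k : Fin K, Matrix (Fin m) (Fin (dF k)) ℂ)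
    (CF : ∀ j k : Fin K, Fin d → Matrix (Fin (dF j)) (Fin (dF k)) ℂ) (ℓ : Fin d) :
    redKraus dG W CF ℓ 0 =
      ∑ j : Fin K, ((Real.sqrt (dG j) : ℂ))⁻¹ • (W j * CF j j ℓ * (W j)ᴴ) := by
  refine Finset.sum_congr rfl fun j _ => ?_
  rw [Finset.sum_eq_single j]
  · rw [if_pos (sub_self _)]
  · intro k _ hk
    rw [if_neg fun h => hk (Fin.ext (by omega))]
  · exact fun h => absurd (Finset.mem_univ j) h

theorem redKraus_eq_zero {d : ℕ} (W : ∀ k : Fin K, Matrix (Fin m) (Fin (dF k)) ℂ)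
    {CF : ∀ j k : Fin K, Fin d → Matrix (Fin (dF j)) (Fin (dF k)) ℂ} {ℓ : Fin d} {e : ℤ}
    (h : ∀ j k : Fin K, (k : ℤ) - j = e → CF j k ℓ = 0) :
    redKraus dG W CF ℓ e = 0 := by
  refine Finset.sum_eq_zero fun j _ => Finset.sum_eq_zero fun k _ => ?_
  split_ifs with hjk
  · rw [h j k hjk, Matrix.mul_zero, Matrix.zero_mul, smul_zero]
  · rfl

theorem trace_eq_zero_of_trace_smul_one_mul {𝕜 ι : Type*} [Field 𝕜] [StarRing 𝕜] [Fintype ι]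
    [DecidableEq ι] {c : 𝕜} (hc : c ≠ 0) {G : Matrix ι ι 𝕜}
    (h : ((c • (1 : Matrix ι ι 𝕜))ᴴ * G).trace = 0) : G.trace = 0 := by
  rw [Matrix.conjTranspose_smul, Matrix.conjTranspose_one, Matrix.smul_mul, Matrix.one_mul,
    Matrix.trace_smul, smul_eq_mul] at h
  exact (mul_eq_zero.mp h).resolve_left (star_ne_zero.mpr hc)

theorem inv_sqrt_mul_inv_sqrt_natCast (x : ℕ) :
    ((Real.sqrt x : ℂ))⁻¹ * ((Real.sqrt x : ℂ))⁻¹ = ((x : ℂ))⁻¹ := by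
  rw [← mul_inv, ← Complex.ofReal_mul, Real.mul_self_sqrt (Nat.cast_nonneg x),
    Complex.ofReal_natCast]

theorem Jstar_is_a_reduced_Kraus_operator_general
    (V : ∀ k : Fin K, Matrix (Fin n) (Fin (dF k) × Fin (dG k)) ℂ)
    (W : ∀ k : Fin K, Matrix (Fin m) (Fin (dF k)) ℂ)
    (hVortho : ∀ k, (V k)ᴴ * V k = 1)
    (hVdisj : ∀ j k, j ≠ k → (V j)ᴴ * V k = 0)
    (hdG : ∀ k, 0 < dG k)
    {d : ℕ} (hd : 0 < d) (C : Mat n)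
    (CF : ∀ j k : Fin K, Fin d → Matrix (Fin (dF j)) (Fin (dF k)) ℂ)
    (GG : ∀ j k : Fin K, Fin d → Matrix (Fin (dG j)) (Fin (dG k)) ℂ)
    (hC : C = ∑ j : Fin K, ∑ k : Fin K, ∑ ℓ : Fin d,
      V j * ((CF j k ℓ) ⊗ₖ (GG j k ℓ)) * (V k)ᴴ)
    (hGorth : ∀ (j k : Fin K) (ℓ f : Fin d), ℓ ≠ f → ((GG j k ℓ)ᴴ * GG j k f).trace = 0)
    (hGnorm : ∀ (j k : Fin K) (ℓ : Fin d), GG j k ℓ ≠ 0 → ((GG j k ℓ)ᴴ * GG j k ℓ).trace = 1)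
    (hpad : ∀ (j k : Fin K) (ℓ : Fin d), GG j k ℓ = 0 → CF j k ℓ = 0)
    -- the first basis element on each diagonal block is the normalized identity
    (hfirst : ∀ j : Fin K, GG j j ⟨0, hd⟩ =
      ((Real.sqrt (dG j) : ℂ))⁻¹ • (1 : Matrix (Fin (dG j)) (Fin (dG j)) ℂ)) :
    -- J*(C) is the reduced Kraus operator Č_{1,0}
    Jstar V W C = redKraus dG W CF ⟨0, hd⟩ 0 ∧
    -- if C belongs to the algebra A itself, all the other reduced Kraus operators vanish
    ((∃ B : ∀ k : Fin K, Matrix (Fin (dF k)) (Fin (dF k)) ℂ,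
        C = ∑ k : Fin K, V k * ((B k) ⊗ₖ (1 : Matrix (Fin (dG k)) (Fin (dG k)) ℂ)) * (V k)ᴴ) →
      ∀ (ℓ : Fin d) (e : ℤ), ¬(ℓ = ⟨0, hd⟩ ∧ e = 0) → redKraus dG W CF ℓ e = 0) := by
  have hcoeff : ∀ q p f, CF q p f = partialInner (GG q p f) ((V q)ᴴ * C * V p) := by
    intro q p f
    have hC' : C = ∑ j, ∑ k, V j * (∑ ℓ, CF j k ℓ ⊗ₖ GG j k ℓ) * (V k)ᴴ := by
      simp only [hC, Matrix.mul_sum, Matrix.sum_mul]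
    rw [hC', conjTranspose_mul_sum_sum_mul_of_orthonormal hVortho hVdisj]
    exact eq_partialInner_sum_kronecker _ _ (hGorth q p) (hGnorm q p) (hpad q p) f
  refine ⟨?_, ?_⟩
  · rw [redKraus_zero]
    refine Finset.sum_congr rfl fun q _ => ?_
    rw [hcoeff q q, hfirst, partialInner_smul_left, ← ptrG_eq_partialInner_one, star_inv₀,
      Complex.star_def, Complex.conj_ofReal, Matrix.mul_smul, Matrix.smul_mul, smul_smul,
      inv_sqrt_mul_inv_sqrt_natCast]
  · rintro ⟨B, hCB⟩ ℓ e hℓe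
    have htrace : ∀ q f, f ≠ ⟨0, hd⟩ → (GG q q f).trace = 0 := fun q f hf => by
      have hsqrt : ((Real.sqrt (dG q) : ℂ))⁻¹ ≠ 0 := inv_ne_zero <|
        Complex.ofReal_ne_zero.mpr (Real.sqrt_pos.mpr (Nat.cast_pos.mpr (hdG q))).ne'
      exact trace_eq_zero_of_trace_smul_one_mul hsqrt (hfirst q ▸ hGorth q q _ f (Ne.symm hf))
    refine redKraus_eq_zero W fun j k hjk => ?_
    rw [hcoeff, hCB, conjTranspose_mul_sum_diag_mul_of_orthonormal hVortho hVdisj]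
    rcases eq_or_ne j k with rfl | hne
    · have hℓ : ℓ ≠ ⟨0, hd⟩ := fun h => hℓe ⟨h, by omega⟩
      rw [hVortho, Matrix.mul_one, partialInner_kronecker, Matrix.mul_one,
        Matrix.trace_conjTranspose, htrace j ℓ hℓ, star_zero, zero_smul]
    · rw [hVdisj j k hne, Matrix.mul_zero, map_zero]

theorem Jstar_is_a_reduced_Kraus_operator
    (V : ∀ k : Fin K, Matrix (Fin n) (Fin (dF k) × Fin (dG k)) ℂ)
    (W : ∀ k : Fin K, Matrix (Fin m) (Fin (dF k)) ℂ)
    (hVortho : ∀ k, (V k)ᴴ * V k = 1)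
    (hVdisj : ∀ j k, j ≠ k → (V j)ᴴ * V k = 0)
    (hVcomplete : ∑ k : Fin K, V k * (V k)ᴴ = 1)
    (hWortho : ∀ k, (W k)ᴴ * W k = 1)
    (hWdisj : ∀ j k, j ≠ k → (W j)ᴴ * W k = 0)
    (hWcomplete : ∑ k : Fin K, W k * (W k)ᴴ = 1)
    (hdG : ∀ k, 0 < dG k)
    {d : ℕ} (hd : 0 < d) (C : Mat n)
    (CF : ∀ j k : Fin K, Fin d → Matrix (Fin (dF j)) (Fin (dF k)) ℂ)
    (GG : ∀ j k : Fin K, Fin d → Matrix (Fin (dG j)) (Fin (dG k)) ℂ)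
    (hC : C = ∑ j : Fin K, ∑ k : Fin K, ∑ ℓ : Fin d,
      V j * ((CF j k ℓ) ⊗ₖ (GG j k ℓ)) * (V k)ᴴ)
    (hGorth : ∀ (j k : Fin K) (ℓ f : Fin d), ℓ ≠ f → ((GG j k ℓ)ᴴ * GG j k f).trace = 0)
    (hGnorm : ∀ (j k : Fin K) (ℓ : Fin d), GG j k ℓ ≠ 0 → ((GG j k ℓ)ᴴ * GG j k ℓ).trace = 1)
    (hpad : ∀ (j k : Fin K) (ℓ : Fin d), GG j k ℓ = 0 → CF j k ℓ = 0)
    -- the first basis element on each diagonal block is the normalized identity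
    (hfirst : ∀ j : Fin K, GG j j ⟨0, hd⟩ =
      ((Real.sqrt (dG j) : ℂ))⁻¹ • (1 : Matrix (Fin (dG j)) (Fin (dG j)) ℂ)) :
    -- J*(C) is the reduced Kraus operator Č_{1,0}
    Jstar V W C = redKraus dG W CF ⟨0, hd⟩ 0 ∧
    -- if C belongs to the algebra A itself, all the other reduced Kraus operators vanish
    ((∃ B : ∀ k : Fin K, Matrix (Fin (dF k)) (Fin (dF k)) ℂ,
        C = ∑ k : Fin K, V k * ((B k) ⊗ₖ (1 : Matrix (Fin (dG k)) (Fin (dG k)) ℂ)) * (V k)ᴴ) →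
      ∀ (ℓ : Fin d) (e : ℤ), ¬(ℓ = ⟨0, hd⟩ ∧ e = 0) → redKraus dG W CF ℓ e = 0) :=
  Jstar_is_a_reduced_Kraus_operator_general V W hVortho hVdisj hdG hd C CF GG hC hGorth hGnorm hpad
    hfirst

end
end

section
/- With P and U_N defined as in the spin-chain construction, for every N ≥ 2 and every 1 ≤ j ≤ N−1 it holds that U_N (σ_x^{(j)} σ_x^{(j+1)}) U_N* = σ_x^{(j+1)}. -/
/-!
Conjugation by a reindexed Kronecker product acts factorwise, and
`U_{n+2} = (P ⊗ 1)(1₂ ⊗ U_{n+1})`. The matrix `P` is the CNOT permutation `(a, b) ↦ (a + b, b)`,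
which fixes `σx ⊗ 1` and sends `σx ⊗ σx` to `1 ⊗ σx`. Since `1₂ ⊗ U_{n+1}` does not touch the first
site and `U_{n+1}` is unitary, `U_N` fixes `σx^{(1)}`; this settles the pair `(1, 2)`. For a later
pair, `1₂ ⊗ U_{n+1}` maps it to `σx^{(j+1)}` by induction, and `P ⊗ 1` acts as the identity there
because `j + 1 ≥ 3`.
-/

open Matrix
open scoped Kronecker BigOperators Matrix

noncomputable section

/-- Matrices acting on the N-qubit Hilbert space (ℂ²)^{⊗N}. -/
abbrev QMat (N : ℕ) : Type := Matrix (Fin N → Fin 2) (Fin N → Fin 2) ℂ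

def pauliX : Matrix (Fin 2) (Fin 2) ℂ := !![0, 1; 1, 0]
def pauliY : Matrix (Fin 2) (Fin 2) ℂ := !![0, -Complex.I; Complex.I, 0]
def pauliZ : Matrix (Fin 2) (Fin 2) ℂ := !![1, 0; 0, -1]

/-- The local operator `σ_q^{(j)} = 1 ⊗ ⋯ ⊗ A ⊗ ⋯ ⊗ 1` acting on the j-th qubit. -/
def localOp (N : ℕ) (j : Fin N) (A : Matrix (Fin 2) (Fin 2) ℂ) : QMat N :=
  Matrix.of fun v w =>
    ∏ i : Fin N, if i = j then A (v i) (w i) else (if v i = w i then (1 : ℂ) else 0)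

/-- The two-qubit permutation matrix
`P = ½(1₄ + σx⊗1₂ + 1₂⊗σz − σx⊗σz)`, i.e. the matrix with rows e₁, e₄, e₃, e₂. -/
def Pmat : Matrix (Fin 2 × Fin 2) (Fin 2 × Fin 2) ℂ :=
  (2⁻¹ : ℂ) • ((1 : Matrix (Fin 2 × Fin 2) (Fin 2 × Fin 2) ℂ)
    + pauliX ⊗ₖ (1 : Matrix (Fin 2) (Fin 2) ℂ)
    + (1 : Matrix (Fin 2) (Fin 2) ℂ) ⊗ₖ pauliZ
    - pauliX ⊗ₖ pauliZ)

/-- The recursively defined unitaries: `U₁ = 1₂`, `U_N = (P ⊗ 1)(1₂ ⊗ U_{N−1})`. -/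
def Umat : (N : ℕ) → QMat N
  | 0 => 1
  | 1 => 1
  | (N + 2) =>
      (Matrix.of fun v w =>
        Pmat (v 0, v 1) (w 0, w 1) *
          ∏ i : Fin (N + 2), if 2 ≤ (i : ℕ) then (if v i = w i then (1 : ℂ) else 0) else 1) *
      (Matrix.of fun v w =>
        (if v 0 = w 0 then (1 : ℂ) else 0) *
          Umat (N + 1) (fun i => v i.succ) (fun i => w i.succ))

section KroneckerReindex

variable {R ι κ ν : Type*} [CommSemiring R] (e : ι × κ ≃ ν)

theorem reindex_one_kronecker_one [DecidableEq ι] [DecidableEq κ] [DecidableEq ν] :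
    reindex e e ((1 : Matrix ι ι R) ⊗ₖ (1 : Matrix κ κ R)) = 1 := by
  rw [one_kronecker_one, reindex_apply, submatrix_one_equiv]

variable [Fintype ι] [Fintype κ] [Fintype ν]

theorem reindex_kronecker_mul_reindex_kronecker (A B : Matrix ι ι R) (C D : Matrix κ κ R) :
    reindex e e (A ⊗ₖ C) * reindex e e (B ⊗ₖ D) = reindex e e ((A * B) ⊗ₖ (C * D)) := by
  rw [reindex_apply, reindex_apply, reindex_apply, submatrix_mul_equiv, mul_kronecker_mul]

theorem reindex_kronecker_conj [StarRing R] (A B : Matrix ι ι R) (C D : Matrix κ κ R) :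
    reindex e e (A ⊗ₖ C) * reindex e e (B ⊗ₖ D) * (reindex e e (A ⊗ₖ C))ᴴ =
      reindex e e ((A * B * Aᴴ) ⊗ₖ (C * D * Cᴴ)) := by
  rw [conjTranspose_reindex, conjTranspose_kronecker, reindex_kronecker_mul_reindex_kronecker,
    reindex_kronecker_mul_reindex_kronecker]

end KroneckerReindex

section KronCons

variable {R α : Type*} [CommSemiring R] {n : ℕ}

def kronCons (A : Matrix α α R) (M : Matrix (Fin n → α) (Fin n → α) R) :
    Matrix (Fin (n + 1) → α) (Fin (n + 1) → α) R :=
  reindex (Fin.consEquiv fun _ => α) (Fin.consEquiv fun _ => α) (A ⊗ₖ M)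

def Fin.consEquiv₂ (α : Type*) (n : ℕ) : (α × α) × (Fin n → α) ≃ (Fin (n + 2) → α) :=
  (Equiv.prodAssoc α α _).trans <|
    ((Equiv.refl α).prodCongr (Fin.consEquiv fun _ => α)).trans (Fin.consEquiv fun _ => α)

def kronCons₂ (B : Matrix (α × α) (α × α) R) (M : Matrix (Fin n → α) (Fin n → α) R) :
    Matrix (Fin (n + 2) → α) (Fin (n + 2) → α) R :=
  reindex (Fin.consEquiv₂ α n) (Fin.consEquiv₂ α n) (B ⊗ₖ M)

@[simp]
theorem kronCons_apply (A : Matrix α α R) (M : Matrix (Fin n → α) (Fin n → α) R)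
    (v w : Fin (n + 1) → α) :
    kronCons A M v w = A (v 0) (w 0) * M (fun i => v i.succ) (fun i => w i.succ) :=
  rfl

@[simp]
theorem kronCons₂_apply (B : Matrix (α × α) (α × α) R) (M : Matrix (Fin n → α) (Fin n → α) R)
    (v w : Fin (n + 2) → α) :
    kronCons₂ B M v w =
      B (v 0, v 1) (w 0, w 1) * M (fun i => v i.succ.succ) (fun i => w i.succ.succ) :=
  rfl

theorem kronCons_kronCons (A B : Matrix α α R) (M : Matrix (Fin n → α) (Fin n → α) R) :
    kronCons A (kronCons B M) = kronCons₂ (A ⊗ₖ B) M := by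
  ext v w
  exact (mul_assoc _ _ _).symm

theorem kronCons_mul_kronCons [Fintype α] (A B : Matrix α α R)
    (M N : Matrix (Fin n → α) (Fin n → α) R) :
    kronCons A M * kronCons B N = kronCons (A * B) (M * N) :=
  reindex_kronecker_mul_reindex_kronecker _ A B M N

variable [DecidableEq α]

@[simp]
theorem kronCons_one_one :
    kronCons (1 : Matrix α α R) (1 : Matrix (Fin n → α) (Fin n → α) R) = 1 :=
  reindex_one_kronecker_one _

@[simp]
theorem kronCons₂_one_one :
    kronCons₂ (1 : Matrix (α × α) (α × α) R) (1 : Matrix (Fin n → α) (Fin n → α) R) = 1 :=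
  reindex_one_kronecker_one _

variable [Fintype α] [StarRing R]

theorem kronCons_one_conj (U M : Matrix (Fin n → α) (Fin n → α) R) (C : Matrix α α R) :
    kronCons 1 U * kronCons C M * (kronCons 1 U)ᴴ = kronCons C (U * M * Uᴴ) := by
  rw [kronCons, kronCons, reindex_kronecker_conj, one_mul, conjTranspose_one, mul_one]; rfl

theorem kronCons₂_conj_one (P C : Matrix (α × α) (α × α) R)
    (M : Matrix (Fin n → α) (Fin n → α) R) :
    kronCons₂ P 1 * kronCons₂ C M * (kronCons₂ P 1)ᴴ = kronCons₂ (P * C * Pᴴ) M := by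
  rw [kronCons₂, kronCons₂, reindex_kronecker_conj, one_mul, conjTranspose_one, mul_one]; rfl

end KronCons

theorem prod_ite_eq_one_apply {ι α R : Type*} [Fintype ι] [DecidableEq α]
    [CommMonoidWithZero R] (v w : ι → α) :
    (∏ i, if v i = w i then (1 : R) else 0) = (1 : Matrix (ι → α) (ι → α) R) v w := by
  simp [one_apply, Finset.prod_boole, funext_iff]

theorem localOp_zero {n : ℕ} (A : Matrix (Fin 2) (Fin 2) ℂ) :
    localOp (n + 1) 0 A = kronCons A 1 := by
  ext v w
  simp [localOp, Fin.prod_univ_succ, Fin.succ_ne_zero, prod_ite_eq_one_apply]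

theorem localOp_succ {n : ℕ} (j : Fin n) (A : Matrix (Fin 2) (Fin 2) ℂ) :
    localOp (n + 1) j.succ A = kronCons 1 (localOp n j A) := by
  ext v w
  simp [localOp, Fin.prod_univ_succ, (Fin.succ_ne_zero j).symm, one_apply]

theorem Umat_succ_succ (n : ℕ) :
    Umat (n + 2) = kronCons₂ Pmat 1 * kronCons 1 (Umat (n + 1)) := by
  rw [Umat]
  congr 1
  ext v w
  simp [Fin.prod_univ_succ, prod_ite_eq_one_apply]

theorem Pmat_apply (a b c d : Fin 2) :
    Pmat (a, b) (c, d) = if c = a + b ∧ d = b then 1 else 0 := by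
  fin_cases a <;> fin_cases b <;> fin_cases c <;> fin_cases d <;>
    simp [Pmat, pauliX, pauliZ, one_apply] <;> norm_num

theorem pauliX_apply (a b : Fin 2) : pauliX a b = if a = b then 0 else 1 := by
  fin_cases a <;> fin_cases b <;> simp [pauliX]

theorem conjTranspose_Pmat : Pmatᴴ = Pmat := by
  ext ⟨a, b⟩ ⟨c, d⟩
  simp only [conjTranspose_apply, Pmat_apply]
  fin_cases a <;> fin_cases b <;> fin_cases c <;> fin_cases d <;> simp

theorem Pmat_mul_conjTranspose_self : Pmat * Pmatᴴ = 1 := by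
  ext ⟨a, b⟩ ⟨c, d⟩
  simp only [conjTranspose_Pmat, mul_apply, Fintype.sum_prod_type, Fin.sum_univ_two,
    Pmat_apply, one_apply]
  fin_cases a <;> fin_cases b <;> fin_cases c <;> fin_cases d <;> simp

theorem Pmat_conj_pauliX_kronecker_one : Pmat * (pauliX ⊗ₖ 1) * Pmatᴴ = pauliX ⊗ₖ 1 := by
  ext ⟨a, b⟩ ⟨c, d⟩
  simp only [conjTranspose_Pmat, mul_apply, Fintype.sum_prod_type, Fin.sum_univ_two, Pmat_apply,
    one_apply, kroneckerMap_apply, pauliX_apply]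
  fin_cases a <;> fin_cases b <;> fin_cases c <;> fin_cases d <;> simp

theorem Pmat_conj_pauliX_kronecker_pauliX : Pmat * (pauliX ⊗ₖ pauliX) * Pmatᴴ = 1 ⊗ₖ pauliX := by
  ext ⟨a, b⟩ ⟨c, d⟩
  simp only [conjTranspose_Pmat, mul_apply, Fintype.sum_prod_type, Fin.sum_univ_two, Pmat_apply,
    one_apply, kroneckerMap_apply, pauliX_apply]
  fin_cases a <;> fin_cases b <;> fin_cases c <;> fin_cases d <;> simp

theorem Umat_succ_succ_conj {n : ℕ} {C D : Matrix (Fin 2) (Fin 2) ℂ} {M : QMat (n + 1)}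
    {L : QMat n} (h : Umat (n + 1) * M * (Umat (n + 1))ᴴ = kronCons D L) :
    Umat (n + 2) * kronCons C M * (Umat (n + 2))ᴴ = kronCons₂ (Pmat * (C ⊗ₖ D) * Pmatᴴ) L := by
  calc Umat (n + 2) * kronCons C M * (Umat (n + 2))ᴴ
      = kronCons₂ Pmat 1 * (kronCons 1 (Umat (n + 1)) * kronCons C M *
          (kronCons 1 (Umat (n + 1)))ᴴ) * (kronCons₂ Pmat 1)ᴴ := by
        rw [Umat_succ_succ, conjTranspose_mul]
        simp only [Matrix.mul_assoc]
    _ = kronCons₂ Pmat 1 * kronCons₂ (C ⊗ₖ D) L * (kronCons₂ Pmat 1)ᴴ := by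
        rw [kronCons_one_conj, h, kronCons_kronCons]
    _ = kronCons₂ (Pmat * (C ⊗ₖ D) * Pmatᴴ) L := kronCons₂_conj_one _ _ _

theorem Umat_mul_conjTranspose_self : ∀ n, Umat n * (Umat n)ᴴ = 1
  | 0 | 1 => by simp [Umat]
  | n + 2 => by
    have h : Umat (n + 1) * 1 * (Umat (n + 1))ᴴ = kronCons 1 1 := by
      rw [mul_one, Umat_mul_conjTranspose_self, kronCons_one_one]
    simpa [one_kronecker_one, Pmat_mul_conjTranspose_self] using Umat_succ_succ_conj (C := 1) h

theorem Umat_conj_kronCons_pauliX_one :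
    ∀ n, Umat (n + 1) * kronCons pauliX 1 * (Umat (n + 1))ᴴ = kronCons pauliX 1
  | 0 => by simp [Umat]
  | n + 1 => by
    have h : Umat (n + 1) * 1 * (Umat (n + 1))ᴴ = kronCons 1 1 := by
      rw [mul_one, Umat_mul_conjTranspose_self, kronCons_one_one]
    rw [Umat_succ_succ_conj h, Pmat_conj_pauliX_kronecker_one, ← kronCons_kronCons,
      kronCons_one_one]

theorem Umat_conj_localOp_pauliX_zero_mul_one (n : ℕ) :
    Umat (n + 2) * (localOp (n + 2) 0 pauliX * localOp (n + 2) 1 pauliX) * (Umat (n + 2))ᴴ =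
      localOp (n + 2) 1 pauliX := by
  rw [← Fin.succ_zero_eq_one, localOp_succ, localOp_zero, localOp_zero, kronCons_mul_kronCons,
    mul_one, one_mul, Umat_succ_succ_conj (Umat_conj_kronCons_pauliX_one n),
    Pmat_conj_pauliX_kronecker_pauliX, ← kronCons_kronCons]

theorem Umat_conj_localOp_pauliX_castSucc_mul_succ (n : ℕ) (j : Fin (n + 1)) :
    Umat (n + 2) * (localOp (n + 2) j.castSucc pauliX * localOp (n + 2) j.succ pauliX) *
      (Umat (n + 2))ᴴ = localOp (n + 2) j.succ pauliX := by
  induction n with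
  | zero => simpa [Fin.fin_one_eq_zero j] using Umat_conj_localOp_pauliX_zero_mul_one 0
  | succ m ih =>
    cases j using Fin.cases with
    | zero => exact Umat_conj_localOp_pauliX_zero_mul_one (m + 1)
    | succ k =>
      rw [← Fin.succ_castSucc, localOp_succ, localOp_succ, kronCons_mul_kronCons, one_mul,
        Umat_succ_succ_conj ((ih k).trans (localOp_succ k pauliX)), localOp_succ,
        one_kronecker_one, mul_one, Pmat_mul_conjTranspose_self, ← one_kronecker_one,
        ← kronCons_kronCons]

theorem Umat_conj_pauliXX_general (N : ℕ) (j : Fin N) (h : (j : ℕ) + 1 < N) :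
    Umat N * (localOp N j pauliX * localOp N ⟨(j : ℕ) + 1, h⟩ pauliX) * (Umat N)ᴴ =
      localOp N ⟨(j : ℕ) + 1, h⟩ pauliX := by
  obtain ⟨n, rfl⟩ : ∃ n, N = n + 2 := ⟨N - 2, by omega⟩
  exact Umat_conj_localOp_pauliX_castSucc_mul_succ n ⟨j, by omega⟩

theorem Umat_conj_pauliXX (N : ℕ) (hN : 2 ≤ N) (j : Fin N) (h : (j : ℕ) + 1 < N) :
    Umat N * (localOp N j pauliX * localOp N ⟨(j : ℕ) + 1, h⟩ pauliX) * (Umat N)ᴴ =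
      localOp N ⟨(j : ℕ) + 1, h⟩ pauliX :=
  Umat_conj_pauliXX_general N j h

end
end
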